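/- arXiv:0707.0699 — 5 statements merged into one kernel-verified Lean document; each statement's English description precedes it below -/
import Mathlib

section
/- Newton's identity (low powers): Let R be a commutative ring and let s be a multiset of elements of R with card s = n. Then for every k with 1 ≤ k ≤ n, the k-th power sum satisfies p_k(s) = Σ_{i=1}^{k-1} (-1)^{i+1} · e_i(s) · p_{k-i}(s) + (-1)^{k+1} · k · e_k(s). (In Euler's notation, with the monic equation x^n - A x^{n-1} + B x^{n-2} - ... = 0 whose root multiset is s, this reads ∫α^k = A∫α^{k-1} - B∫α^{k-2} + C∫α^{k-3} - ... ± k·(k-th coefficient).) -/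
/-- The `k`-th power sum of a multiset `s`: the sum of the `k`-th powers of its elements. -/
def Multiset.psum {R : Type*} [CommRing R] (s : Multiset R) (k : ℕ) : R :=
  (s.map (· ^ k)).sum

/-!
Newton's identities hold for the power sums and elementary symmetric polynomials in finitely many
indeterminates (`MvPolynomial.psum_eq_mul_esymm_sub_sum`). Indexing the elements of `s` by the
type `s` itself and evaluating the indeterminates at them turns that identity into the one for `s`.
-/

open Finset

theorem MvPolynomial.aeval_psum_eq_multiset_psum {σ R S : Type*} [Fintype σ] [CommSemiring R]
    [CommRing S] [Algebra R S] (k : ℕ) (f : σ → S) :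
    aeval f (psum σ R k) = (univ.val.map f).psum k := by
  simp only [psum, map_sum, map_pow, aeval_X, Multiset.psum, Multiset.map_map,
    Function.comp_apply, sum_map_val]

theorem Finset.Nat.sum_antidiagonal_filter_fst_mem_Ioo {M : Type*} [AddCommMonoid M]
    (f : ℕ → ℕ → M) (k : ℕ) :
    ∑ a ∈ antidiagonal k with a.1 ∈ Set.Ioo 0 k, f a.1 a.2 = ∑ i ∈ Ico 1 k, f i (k - i) := by
  rw [sum_filter, Nat.sum_antidiagonal_eq_sum_range_succ
    (fun i j ↦ if i ∈ Set.Ioo 0 k then f i j else 0), ← sum_filter]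
  congr 1
  ext i
  simp only [mem_filter, mem_range, Set.mem_Ioo, mem_Ico]
  omega

theorem Multiset.psum_eq_mul_esymm_sub_sum {R : Type*} [CommRing R] (s : Multiset R) (k : ℕ)
    (hk : 0 < k) :
    s.psum k = (-1) ^ (k + 1) * k * s.esymm k -
      ∑ i ∈ Finset.Ico 1 k, (-1) ^ i * s.esymm i * s.psum (k - i) := by
  classical
  have key := congrArg (MvPolynomial.aeval fun x : s ↦ (x : R))
    (MvPolynomial.psum_eq_mul_esymm_sub_sum s R k hk)
  simp only [map_sub, map_mul, map_pow, map_neg, map_one, map_natCast, map_sum,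
    MvPolynomial.aeval_psum_eq_multiset_psum, MvPolynomial.aeval_esymm_eq_multiset_esymm,
    Multiset.map_univ_coe] at key
  rwa [Nat.sum_antidiagonal_filter_fst_mem_Ioo
    (fun i j ↦ (-1 : R) ^ i * s.esymm i * s.psum j)] at key

theorem newton_identity_low_general {R : Type*} [CommRing R] (s : Multiset R) (k : ℕ)
    (hk1 : 1 ≤ k) :
    s.psum k =
      ∑ i ∈ Finset.Ico 1 k, (-1 : R) ^ (i + 1) * s.esymm i * s.psum (k - i)
        + (-1 : R) ^ (k + 1) * (k : R) * s.esymm k := by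
  rw [s.psum_eq_mul_esymm_sub_sum k hk1, sub_eq_neg_add, ← sum_neg_distrib]
  congr 1
  refine sum_congr rfl fun i _ ↦ ?_
  ring

/-- Newton's identity (low powers): for a multiset `s` of cardinality `n` and `1 ≤ k ≤ n`,
`p_k(s) = Σ_{i=1}^{k-1} (-1)^(i+1) e_i(s) p_{k-i}(s) + (-1)^(k+1) k e_k(s)`. -/
theorem newton_identity_low {R : Type*} [CommRing R] (s : Multiset R) (n k : ℕ)
    (hcard : Multiset.card s = n) (hk1 : 1 ≤ k) (hkn : k ≤ n) :
    s.psum k =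
      ∑ i ∈ Finset.Ico 1 k, (-1 : R) ^ (i + 1) * s.esymm i * s.psum (k - i)
        + (-1 : R) ^ (k + 1) * (k : R) * s.esymm k :=
  newton_identity_low_general s k hk1
end

section
/- Newton's identity for higher powers (§11): Let R be a commutative ring and let s be a multiset of elements of R with card s = n ≥ 1. Then for every m ≥ 1, p_{n+m}(s) = Σ_{i=1}^{n} (-1)^{i+1} · e_i(s) · p_{n+m-i}(s). (In Euler's notation: ∫α^{n+m} = A∫α^{n+m-1} - B∫α^{n+m-2} + C∫α^{n+m-3} - ... ∓ M∫α^{m+1} ± N∫α^{m}.) -/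
lemma sum_map_finset_sum {R : Type*} [CommRing R] (s : Multiset R) (I : Finset ℕ)
    (g : ℕ → R → R) :
    (s.map (fun x => ∑ i ∈ I, g i x)).sum = ∑ i ∈ I, (s.map (g i)).sum := by
  induction s using Multiset.induction with
  | empty => simp
  | cons a t ih => simp [ih, Finset.sum_add_distrib]

/-- Newton's identity for higher powers (§11): for a multiset `s` of cardinality `n ≥ 1` and
any `m ≥ 1`, `p_{n+m}(s) = Σ_{i=1}^{n} (-1)^(i+1) e_i(s) p_{n+m-i}(s)`. -/
theorem newton_identity_high {R : Type*} [CommRing R] (s : Multiset R) (n : ℕ)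
    (hcard : Multiset.card s = n) (hn : 1 ≤ n) (m : ℕ) (hm : 1 ≤ m) :
    s.psum (n + m) =
      ∑ i ∈ Finset.Icc 1 n, (-1 : R) ^ (i + 1) * s.esymm i * s.psum (n + m - i) := by
  have key : ∀ x ∈ s, x ^ n = ∑ i ∈ Finset.Icc 1 n, (-1 : R) ^ (i + 1) * s.esymm i * x ^ (n - i) := by
    intro x hx
    have h0 : ((s.map fun t => Polynomial.X - Polynomial.C t).prod).eval x = 0 := by
      rw [Polynomial.eval_multiset_prod]
      apply Multiset.prod_eq_zero
      rw [Multiset.map_map]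
      refine Multiset.mem_map.2 ⟨x, hx, by simp⟩
    rw [Multiset.prod_X_sub_X_eq_sum_esymm, hcard, Polynomial.eval_finset_sum] at h0
    simp only [Polynomial.eval_mul, Polynomial.eval_pow, Polynomial.eval_neg,
      Polynomial.eval_one, Polynomial.eval_C, Polynomial.eval_X] at h0
    rw [Finset.sum_range_succ'] at h0
    have e0 : s.esymm 0 = 1 := by simp [Multiset.esymm]
    rw [e0] at h0
    simp only [pow_zero, one_mul, Nat.sub_zero] at h0
    have hIcc : ∑ i ∈ Finset.Icc 1 n, (-1 : R) ^ (i + 1) * s.esymm i * x ^ (n - i)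
        = -∑ j ∈ Finset.range n, (-1 : R) ^ (j + 1) * (s.esymm (j + 1) * x ^ (n - (j + 1))) := by
      rw [← Finset.Ico_add_one_right_eq_Icc, Finset.sum_Ico_eq_sum_range, ← Finset.sum_neg_distrib]
      apply Finset.sum_congr (by simp)
      intro j _
      rw [add_comm 1 j]
      ring
    rw [hIcc]
    linear_combination h0
  calc s.psum (n + m) = (s.map (fun x =>
        (∑ i ∈ Finset.Icc 1 n, (-1 : R) ^ (i + 1) * s.esymm i * x ^ (n - i)) * x ^ m)).sum := by
        unfold Multiset.psum
        apply congrArg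
        apply Multiset.map_congr rfl
        intro x hx
        rw [← key x hx, ← pow_add]
    _ = ∑ i ∈ Finset.Icc 1 n, (-1 : R) ^ (i + 1) * s.esymm i * s.psum (n + m - i) := by
        have : ∀ x : R, (∑ i ∈ Finset.Icc 1 n, (-1 : R) ^ (i + 1) * s.esymm i * x ^ (n - i)) * x ^ m
            = ∑ i ∈ Finset.Icc 1 n, (-1 : R) ^ (i + 1) * s.esymm i * x ^ (n + m - i) := by
          intro x
          rw [Finset.sum_mul]
          apply Finset.sum_congr rfl
          intro i hi
          have hi' : i ≤ n := (Finset.mem_Icc.1 hi).2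
          rw [mul_assoc, ← pow_add]
          congr 2
          omega
        simp only [this]
        rw [sum_map_finset_sum]
        apply Finset.sum_congr rfl
        intro i _
        unfold Multiset.psum
        rw [← Multiset.sum_map_mul_left]
end

section
/- Uniform Newton recurrence including the top degree (§9 and §11 combined): Let R be a commutative ring and let s be a multiset of elements of R with card s = n ≥ 1. Then for every m ≥ 0, p_{n+m}(s) = Σ_{i=1}^{n} (-1)^{i+1} · e_i(s) · p_{n+m-i}(s), where by convention p_0(s) = n (since α^0 = 1 for each of the n roots, ∫α^0 = n). -/
private lemma sum_map_finsum {R α ι : Type*} [AddCommMonoid R] (s : Multiset α)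
    (I : Finset ι) (g : ι → α → R) :
    (s.map fun a => ∑ i ∈ I, g i a).sum = ∑ i ∈ I, (s.map (g i)).sum := by
  induction s using Multiset.induction_on with
  | empty => simp
  | cons a s ih => simp [ih, Finset.sum_add_distrib]

private lemma key_root {R : Type*} [CommRing R] (s : Multiset R) (n : ℕ)
    (hcard : Multiset.card s = n) {a : R} (ha : a ∈ s) :
    a ^ n = ∑ i ∈ Finset.Icc 1 n, (-1 : R) ^ (i + 1) * s.esymm i * a ^ (n - i) := by
  have h0 : Polynomial.eval a (s.map fun t => Polynomial.X - Polynomial.C t).prod = 0 := by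
    rw [Polynomial.eval_multiset_prod]
    refine Multiset.prod_eq_zero ?_
    rw [Multiset.map_map]
    refine Multiset.mem_map.2 ⟨a, ha, ?_⟩
    simp
  rw [Multiset.prod_X_sub_X_eq_sum_esymm, Polynomial.eval_finset_sum] at h0
  simp only [Polynomial.eval_mul, Polynomial.eval_pow, Polynomial.eval_C, Polynomial.eval_X,
    Polynomial.eval_neg, Polynomial.eval_one, hcard] at h0
  rw [Finset.sum_range_succ'] at h0
  have he0 : s.esymm 0 = 1 := by simp [Multiset.esymm]
  simp only [pow_zero, he0, one_mul, Nat.sub_zero] at h0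
  have h1 : ∑ i ∈ Finset.Icc 1 n, (-1 : R) ^ (i + 1) * s.esymm i * a ^ (n - i)
      = ∑ i ∈ Finset.range n, (-1 : R) ^ (1 + i + 1) * s.esymm (1 + i) * a ^ (n - (1 + i)) := by
    rw [show Finset.Icc 1 n = Finset.Ico 1 (n + 1) from by rw [Finset.Ico_add_one_right_eq_Icc],
      Finset.sum_Ico_eq_sum_range]
    simp
  rw [h1]
  have h2 : ∀ i ∈ Finset.range n,
      (-1 : R) ^ (1 + i + 1) * s.esymm (1 + i) * a ^ (n - (1 + i))
      = -((-1 : R) ^ (i + 1) * (s.esymm (i + 1) * a ^ (n - (i + 1)))) := by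
    intro i _
    rw [add_comm 1 i]
    ring
  rw [Finset.sum_congr rfl h2, Finset.sum_neg_distrib]
  linear_combination h0

/-- Uniform Newton recurrence including the top degree (§9 and §11 combined): for a multiset
`s` of cardinality `n ≥ 1` and any `m ≥ 0`,
`p_{n+m}(s) = Σ_{i=1}^{n} (-1)^(i+1) e_i(s) p_{n+m-i}(s)`,
with the convention `p_0(s) = n` (which holds for `Multiset.psum` by definition). -/
theorem newton_identity_uniform {R : Type*} [CommRing R] (s : Multiset R) (n : ℕ)
    (hcard : Multiset.card s = n) (hn : 1 ≤ n) (m : ℕ) :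
    s.psum (n + m) =
      ∑ i ∈ Finset.Icc 1 n, (-1 : R) ^ (i + 1) * s.esymm i * s.psum (n + m - i) := by
  unfold Multiset.psum
  have h : ∀ a ∈ s, a ^ (n + m) =
      ∑ i ∈ Finset.Icc 1 n, (-1 : R) ^ (i + 1) * s.esymm i * a ^ (n + m - i) := by
    intro a ha
    have := key_root s n hcard ha
    calc a ^ (n + m) = a ^ n * a ^ m := by rw [pow_add]
      _ = (∑ i ∈ Finset.Icc 1 n, (-1 : R) ^ (i + 1) * s.esymm i * a ^ (n - i)) * a ^ m := by
          rw [this]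
      _ = ∑ i ∈ Finset.Icc 1 n, (-1 : R) ^ (i + 1) * s.esymm i * a ^ (n + m - i) := by
          rw [Finset.sum_mul]
          refine Finset.sum_congr rfl fun i hi => ?_
          have hin : i ≤ n := (Finset.mem_Icc.1 hi).2
          rw [mul_assoc, ← pow_add]
          congr 2
          omega
  rw [Multiset.map_congr rfl h, sum_map_finsum]
  refine Finset.sum_congr rfl fun i _ => ?_
  rw [← Multiset.sum_map_mul_left]
end

section
/- Generating function for power sums (§5–§6): Let R be a commutative ring and let s be a multiset of elements of R. In the formal power series ring R[[T]], set Q = ∏_{α ∈ s} (1 - (C α)·T). Then -Q' = Q · (Σ_{k ≥ 0} p_{k+1}(s) · T^k), where Q' is the formal derivative of Q and the right-hand factor is the power series whose k-th coefficient is the (k+1)-st power sum p_{k+1}(s). (This is Euler's identity dZ/(Z dx) = n/x + ∫α/x² + ∫α²/x³ + ∫α³/x⁴ + ..., obtained by expanding each 1/(x-α) as a geometric series, rewritten in the variable T = 1/x.) -/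
/-!
Each factor satisfies `-(1 - aT)' = a = (1 - aT) · a · Σ aᵏ Tᵏ`, and a derivation turns the
product of such identities into `-Q' = Q · Σ_{a ∈ s} a · Σ aᵏ Tᵏ`; summing the geometric series
coefficientwise gives `Σ p_{k+1}(s) Tᵏ`.
-/

open PowerSeries

theorem Derivation.neg_map_multiset_prod {R A ι : Type*} [CommSemiring R] [CommRing A]
    [Algebra R A] (D : Derivation R A A) (s : Multiset ι) {f g : ι → A}
    (h : ∀ i ∈ s, -D (f i) = f i * g i) :
    -D (s.map f).prod = (s.map f).prod * (s.map g).sum := by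
  induction s using Multiset.induction_on with
  | empty => simp
  | cons i s ih =>
    have hi := h i (Multiset.mem_cons_self i s)
    have hs := ih fun j hj => h j (Multiset.mem_cons_of_mem hj)
    simp only [Multiset.map_cons, Multiset.prod_cons, Multiset.sum_cons, Derivation.leibniz,
      smul_eq_mul]
    linear_combination (s.map f).prod * hi + f i * hs

namespace PowerSeries

variable {R : Type*} [CommRing R]

theorem one_sub_C_mul_X_mul_mk_pow (a : R) : (1 - C a * X) * mk (a ^ ·) = 1 := by
  -- rescaling `T ↦ aT` the identity `(Σ Tᵏ)(1 - T) = 1`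
  simpa [mul_comm, rescale_mk] using congrArg (rescale a) (mk_one_mul_one_sub_eq_one (S := R))

theorem neg_derivative_one_sub_C_mul_X (a : R) :
    -d⁄dX R (1 - C a * X) = (1 - C a * X) * (C a * mk (a ^ ·)) := by
  rw [mul_left_comm, one_sub_C_mul_X_mul_mk_pow]
  simp

end PowerSeries

theorem Multiset.mk_psum_succ {R : Type*} [CommRing R] (s : Multiset R) :
    mk (fun k => s.psum (k + 1)) = (s.map fun a => C a * mk (a ^ ·)).sum := by
  ext n
  simp [Multiset.psum, map_multiset_sum, Multiset.map_map, pow_succ']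

/-- Generating function for power sums (§5–§6): with `Q = ∏_{α ∈ s} (1 - (C α)·T)` in `R⟦T⟧`,
we have `-Q' = Q · (Σ_{k ≥ 0} p_{k+1}(s) · T^k)`. -/
theorem neg_derivative_eq_mul_powerSum_series {R : Type*} [CommRing R] (s : Multiset R)
    (Q : PowerSeries R)
    (hQ : Q = (s.map (fun a => 1 - PowerSeries.C a * PowerSeries.X)).prod) :
    -(PowerSeries.derivative R Q) = Q * PowerSeries.mk (fun k => s.psum (k + 1)) := by
  rw [hQ, s.mk_psum_succ]
  exact (derivative R).neg_map_multiset_prod s fun a _ => neg_derivative_one_sub_C_mul_X a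
end

section
/- Sum of the values of a polynomial at the roots of an equation of equal or lower degree (§8, §10): Let R be a commutative ring and let s be a multiset of elements of R with card s = n. Let Z = ∏_{α ∈ s} (X - C α) ∈ R[X]. Then for every m ≥ 0, the sum over α ∈ s (with multiplicity) of the evaluations eval α (X^m · Z) is zero; expanding Z via its coefficients, this gives Σ_{i=0}^{n} (-1)^i · e_i(s) · p_{n+m-i}(s) = 0 for every m ≥ 1, where e_0(s) = 1. -/
open Polynomial

private lemma multiset_finset_sum_comm {α β : Type*} [AddCommMonoid β] (s : Multiset α)
    (t : Finset ℕ) (f : ℕ → α → β) :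
    ∑ i ∈ t, (s.map (f i)).sum = (s.map (fun a => ∑ i ∈ t, f i a)).sum := by
  induction s using Multiset.induction with
  | empty => simp
  | cons a s ih => simp [Finset.sum_add_distrib, ih]

/-- Sum of the values of a polynomial at the roots of an equation of equal or lower degree
(§8, §10): with `Z = ∏_{α ∈ s} (X - C α)` and `card s = n`, for every `m ≥ 0` the sum over
`α ∈ s` (with multiplicity) of `eval α (X^m · Z)` vanishes; expanding `Z` via its
coefficients, `Σ_{i=0}^{n} (-1)^i e_i(s) p_{n+m-i}(s) = 0` for every `m ≥ 1`,
where `e_0(s) = 1`. -/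
theorem sum_eval_at_roots {R : Type*} [CommRing R] (s : Multiset R) (n : ℕ)
    (hcard : Multiset.card s = n) (Z : R[X])
    (hZ : Z = (s.map (fun a => (X : R[X]) - C a)).prod) :
    (∀ m : ℕ, (s.map (fun a => Polynomial.eval a ((X : R[X]) ^ m * Z))).sum = 0) ∧
      (∀ m : ℕ, 1 ≤ m →
        ∑ i ∈ Finset.range (n + 1), (-1 : R) ^ i * s.esymm i * s.psum (n + m - i) = 0) := by
  have key : ∀ a ∈ s, Polynomial.eval a Z = 0 := by
    intro a ha
    rw [hZ, Polynomial.eval_multiset_prod]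
    apply Multiset.prod_eq_zero
    rw [Multiset.map_map]
    refine Multiset.mem_map.mpr ⟨a, ha, ?_⟩
    simp
  have h1 : ∀ m : ℕ, (s.map (fun a => Polynomial.eval a ((X : R[X]) ^ m * Z))).sum = 0 := by
    intro m
    apply Multiset.sum_eq_zero
    intro x hx
    obtain ⟨a, ha, rfl⟩ := Multiset.mem_map.mp hx
    simp [key a ha]
  refine ⟨h1, fun m hm => ?_⟩
  have hZ' : Z = ∑ j ∈ Finset.range (n + 1),
      (-1 : R[X]) ^ j * (C (s.esymm j) * X ^ (n - j)) := by
    rw [hZ, Multiset.prod_X_sub_X_eq_sum_esymm, hcard]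
  calc ∑ i ∈ Finset.range (n + 1), (-1 : R) ^ i * s.esymm i * s.psum (n + m - i)
      = ∑ i ∈ Finset.range (n + 1), (s.map
          (fun a => (-1 : R) ^ i * s.esymm i * a ^ (n + m - i))).sum := by
        refine Finset.sum_congr rfl fun i _ => ?_
        rw [Multiset.psum, ← Multiset.sum_map_mul_left]
    _ = (s.map (fun a => ∑ i ∈ Finset.range (n + 1),
          (-1 : R) ^ i * s.esymm i * a ^ (n + m - i))).sum := by
        rw [multiset_finset_sum_comm]
    _ = (s.map (fun a => Polynomial.eval a ((X : R[X]) ^ m * Z))).sum := by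
        refine congrArg _ (Multiset.map_congr rfl fun a _ => ?_)
        rw [hZ']
        simp only [Polynomial.eval_mul, Polynomial.eval_pow, Polynomial.eval_X,
          Polynomial.eval_finset_sum, Polynomial.eval_mul, Polynomial.eval_pow,
          Polynomial.eval_one, Polynomial.eval_neg, Polynomial.eval_C,
          Finset.mul_sum]
        refine Finset.sum_congr rfl fun i hi => ?_
        have hile : i ≤ n := Nat.lt_succ_iff.mp (Finset.mem_range.mp hi)
        have : n + m - i = m + (n - i) := by omega
        rw [this, pow_add]
        ring
    _ = 0 := h1 m
end
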